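/- arXiv:1210.3389 — 2 statements merged into one kernel-verified Lean document; each statement's English description precedes it below -/
import Mathlib

section
/- If p and q are equivalent walks of even length n > 0 in the CPS graph Γ(A), then their final vertices coincide: p_n = q_n. -/
/- Combinatorial model of a monomial algebra A = T(V)/I and its CPS graph Γ(A).
   Monomials of the tensor algebra on generators indexed by σ are lists over σ;
   the tensor product w ⊗ m is list concatenation w ++ m. -/

namespace CPS

/-- Monomials of the tensor algebra: words in the generators. -/
abbrev Mon (σ : Type) := List σ

/-- A monomial ideal, given by finitely many monomial generators of degree ≥ 2. -/
structure MonIdeal (σ : Type) where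
  gens : Finset (Mon σ)
  deg2 : ∀ r ∈ gens, 2 ≤ r.length

variable {σ : Type}

/-- Membership in the two-sided monomial ideal generated by `gens`. -/
def MonIdeal.Mem (I : MonIdeal σ) (m : Mon σ) : Prop :=
  ∃ a r b, r ∈ I.gens ∧ m = a ++ r ++ b

/-- 𝔄_m : the set of minimal left annihilating monomials of m
    (w ∉ I, w ⊗ m ∈ I, and no proper suffix of w left-annihilates m). -/
def Ann (I : MonIdeal σ) (m : Mon σ) : Set (Mon σ) :=
  {w | ¬ I.Mem m ∧ ¬ I.Mem w ∧ I.Mem (w ++ m) ∧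
    ∀ w' : Mon σ, w' <:+ w → w' ≠ w → ¬ I.Mem (w' ++ m)}

/-- Directed edges of the CPS graph Γ(A): m₁ → m₂ iff m₂ ∈ 𝔄_{m₁}. -/
def Edge (I : MonIdeal σ) (m₁ m₂ : Mon σ) : Prop := m₂ ∈ Ann I m₁

/-- The vertex sets 𝔊_i : 𝔊_0 = degree-1 generators, 𝔊_{i+1} = ⋃_{w ∈ 𝔊_i} 𝔄_w. -/
def Gs (I : MonIdeal σ) : ℕ → Set (Mon σ)
  | 0 => {m | m.length = 1}
  | (i+1) => ⋃ w ∈ Gs I i, Ann I w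

/-- The vertex set 𝔊 = ⋃_i 𝔊_i of the CPS graph. -/
def Vertices (I : MonIdeal σ) : Set (Mon σ) := ⋃ i, Gs I i

/-- A walk of length n in Γ(A), encoded by a function giving the vertices
    p 0, p 1, ..., p n (values beyond n are irrelevant). -/
def IsWalk (I : MonIdeal σ) (n : ℕ) (p : ℕ → Mon σ) : Prop :=
  p 0 ∈ Vertices I ∧ ∀ i < n, Edge I (p i) (p (i+1))

/-- An infinite walk in Γ(A). -/
def InfWalk (I : MonIdeal σ) (p : ℕ → Mon σ) : Prop :=
  p 0 ∈ Vertices I ∧ ∀ i, Edge I (p i) (p (i+1))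

/-- The reversed tensor product p_n ⊗ p_{n-1} ⊗ ⋯ ⊗ p_0 of the vertices of a walk. -/
def tens (n : ℕ) (p : ℕ → Mon σ) : Mon σ :=
  (((List.range (n+1)).map p).reverse).flatten

/-- Equivalence of walks of the same length n: equal reversed tensor products. -/
def WEquiv (n : ℕ) (p q : ℕ → Mon σ) : Prop := tens n p = tens n q

/-- A walk is anchored if its first vertex lies in 𝔊_0 (is a degree-1 generator). -/
def Anchored (p : ℕ → Mon σ) : Prop := (p 0).length = 1

/-- A walk is admissible if it is a walk equivalent to an anchored walk. -/
def Admissible (I : MonIdeal σ) (n : ℕ) (p : ℕ → Mon σ) : Prop :=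
  IsWalk I n p ∧ ∃ q, IsWalk I n q ∧ Anchored q ∧ WEquiv n p q

/-- The walk obtained by deleting the first i vertices. -/
def shift (p : ℕ → Mon σ) (i : ℕ) : ℕ → Mon σ := fun t => p (i + t)

end CPS

namespace CPS

variable {σ : Type}

lemma MonIdeal.Mem.append_right' {I : MonIdeal σ} {m : Mon σ} (h : I.Mem m) (z : Mon σ) :
    I.Mem (m ++ z) := by
  obtain ⟨a, r, b, hr, rfl⟩ := h
  exact ⟨a, r, b ++ z, hr, by simp⟩

lemma MonIdeal.Mem.append_left' {I : MonIdeal σ} {m : Mon σ} (h : I.Mem m) (x : Mon σ) :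
    I.Mem (x ++ m) := by
  obtain ⟨a, r, b, hr, rfl⟩ := h
  exact ⟨x ++ a, r, b, hr, by simp⟩

lemma tens_succ' (n : ℕ) (p : ℕ → Mon σ) : tens (n+1) p = p (n+1) ++ tens n p := by
  simp [tens, List.range_succ]

lemma tens_zero' (p : ℕ → Mon σ) : tens 0 p = p 0 := by simp [tens, List.range_succ]

lemma tens_suffix' (p : ℕ → Mon σ) {i j : ℕ} (h : i ≤ j) : tens i p <:+ tens j p := by
  obtain ⟨k, rfl⟩ := Nat.exists_eq_add_of_le h
  induction k with
  | zero => exact List.suffix_refl _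
  | succ k ih =>
    have : i + (k+1) = (i+k) + 1 := by omega
    rw [this, tens_succ']
    exact (ih (by omega)).trans (List.suffix_append _ _)

lemma suffix_of_suffix_length_le' {u v w : List σ} (hu : u <:+ w) (hv : v <:+ w)
    (h : u.length ≤ v.length) : u <:+ v := by
  rw [← List.reverse_prefix] at hu hv ⊢
  exact List.prefix_of_prefix_length_le hu hv (by simpa using h)

/-- Key step lemma: if `P ++ X ++ a` and `Q ++ Y ++ a'` are suffixes of the same word `w`,
with `a <:+ a'`, `X ∉ I`, no proper suffix of `P` left-annihilates `X`, and `Q ++ Y ∈ I`,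
then the first suffix is no longer than the second. -/
lemma step' (I : MonIdeal σ) (w P X a Q Y a' : Mon σ)
    (hT : P ++ (X ++ a) <:+ w) (hT' : Q ++ (Y ++ a') <:+ w)
    (ha : a <:+ a')
    (hX : ¬ I.Mem X)
    (hmin : ∀ s, s <:+ P → s ≠ P → ¬ I.Mem (s ++ X))
    (hQY : I.Mem (Q ++ Y)) :
    (P ++ (X ++ a)).length ≤ (Q ++ (Y ++ a')).length := by
  by_contra hlt
  push_neg at hlt
  have hsuf : Q ++ (Y ++ a') <:+ P ++ (X ++ a) :=
    suffix_of_suffix_length_le' hT' hT hlt.le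
  obtain ⟨t, ht⟩ := hsuf
  have htne : t ≠ [] := by
    rintro rfl
    rw [List.nil_append] at ht
    rw [ht] at hlt
    exact lt_irrefl _ hlt
  obtain ⟨z, rfl⟩ := ha
  have key : P ++ X = t ++ (Q ++ (Y ++ z)) := by
    have h2 : (P ++ X) ++ a = (t ++ (Q ++ (Y ++ z))) ++ a := by
      calc (P ++ X) ++ a = P ++ (X ++ a) := by simp [List.append_assoc]
        _ = t ++ (Q ++ (Y ++ (z ++ a))) := ht.symm
        _ = (t ++ (Q ++ (Y ++ z))) ++ a := by simp [List.append_assoc]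
    exact List.append_cancel_right h2
  have htpre : t <+: P ++ X := ⟨Q ++ (Y ++ z), key.symm⟩
  rcases le_or_gt P.length t.length with hpt | hpt
  · -- P is a prefix of t, so Q ++ Y sits inside X : contradiction with X ∉ I
    have hP : P <+: t := List.prefix_of_prefix_length_le ⟨X, rfl⟩ htpre hpt
    obtain ⟨u, rfl⟩ := hP
    have hXeq : X = u ++ ((Q ++ Y) ++ z) := by
      apply List.append_cancel_left (as := P)
      calc P ++ X = (P ++ u) ++ (Q ++ (Y ++ z)) := key
        _ = P ++ (u ++ ((Q ++ Y) ++ z)) := by simp [List.append_assoc]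
    exact hX (hXeq ▸ ((hQY.append_right' z).append_left' u))
  · -- t is a proper prefix of P : contradiction with minimality
    have htP : t <+: P := List.prefix_of_prefix_length_le htpre ⟨X, rfl⟩ hpt.le
    obtain ⟨s, rfl⟩ := htP
    have hs : s ++ X = (Q ++ Y) ++ z := by
      apply List.append_cancel_left (as := t)
      calc t ++ (s ++ X) = (t ++ s) ++ X := by simp [List.append_assoc]
        _ = t ++ (Q ++ (Y ++ z)) := key
        _ = t ++ ((Q ++ Y) ++ z) := by simp [List.append_assoc]
    have hsne : s ≠ t ++ s := by
      intro hh
      have := congrArg List.length hh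
      simp at this
      exact htne this
    exact hmin s ⟨t, rfl⟩ hsne (hs ▸ hQY.append_right' z)

lemma main' (I : MonIdeal σ) (n : ℕ) (hn : 0 < n) (hev : Even n)
    (p q : ℕ → Mon σ) (hp : IsWalk I n p) (hq : IsWalk I n q) (h : WEquiv n p q)
    (h0 : (q 0).length ≤ (p 0).length) : p n = q n := by
  have hwq : tens n q = tens n p := h.symm
  -- suffix facts
  have hsp : ∀ i, i ≤ n → tens i p <:+ tens n p := fun i hi => tens_suffix' p hi
  have hsq : ∀ i, i ≤ n → tens i q <:+ tens n p := fun i hi => hwq ▸ tens_suffix' q hi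
  -- edge data
  have Ep : ∀ i, i < n → ¬ I.Mem (p i) ∧ ¬ I.Mem (p (i+1)) ∧ I.Mem (p (i+1) ++ p i) ∧
      ∀ w' : Mon σ, w' <:+ p (i+1) → w' ≠ p (i+1) → ¬ I.Mem (w' ++ p i) := fun i hi => hp.2 i hi
  have Eq' : ∀ i, i < n → ¬ I.Mem (q i) ∧ ¬ I.Mem (q (i+1)) ∧ I.Mem (q (i+1) ++ q i) ∧
      ∀ w' : Mon σ, w' <:+ q (i+1) → w' ≠ q (i+1) → ¬ I.Mem (w' ++ q i) := fun i hi => hq.2 i hi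
  -- the two directions of the step lemma, packaged
  -- below: generic bidirectional application at a level i+1, given comparison data at i-1 and i.
  have INV : ∀ k, 2*k+1 ≤ n →
      (tens (2*k) q).length ≤ (tens (2*k) p).length ∧ tens (2*k+1) p = tens (2*k+1) q := by
    intro k
    induction k with
    | zero =>
      intro hk
      have h0' : (tens 0 q).length ≤ (tens 0 p).length := by
        simpa [tens_zero'] using h0
      refine ⟨h0', ?_⟩
      have e1p : tens 1 p = p 1 ++ (p 0 ++ ([] : Mon σ)) := by
        rw [tens_succ' 0 p, tens_zero']; simp
      have e1q : tens 1 q = q 1 ++ (q 0 ++ ([] : Mon σ)) := by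
        rw [tens_succ' 0 q, tens_zero']; simp
      have ep := Ep 0 hn
      have eq := Eq' 0 hn
      have d1 : (tens 1 p).length ≤ (tens 1 q).length := by
        rw [e1p, e1q]
        exact step' I (tens n p) (p 1) (p 0) [] (q 1) (q 0) []
          (e1p ▸ hsp 1 hn) (e1q ▸ hsq 1 hn) (List.suffix_refl [])
          ep.1 ep.2.2.2 eq.2.2.1
      have d2 : (tens 1 q).length ≤ (tens 1 p).length := by
        rw [e1p, e1q]
        exact step' I (tens n p) (q 1) (q 0) [] (p 1) (p 0) []
          (e1q ▸ hsq 1 hn) (e1p ▸ hsp 1 hn) (List.suffix_refl [])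
          eq.1 eq.2.2.2 ep.2.2.1
      have hsuf : tens 1 p <:+ tens 1 q :=
        suffix_of_suffix_length_le' (hsp 1 hn) (hsq 1 hn) d1
      exact hsuf.eq_of_length (le_antisymm d1 d2)
    | succ k ih =>
      intro hk
      obtain ⟨ihe, iho⟩ := ih (by omega)
      have h1n : 2*k+1 < n := by omega
      have h2n : 2*k+2 < n := by omega
      have h1le : 2*k+1 ≤ n := by omega
      have h2le : 2*k+2 ≤ n := by omega
      have h3le : 2*k+3 ≤ n := by omega
      have e2p : tens (2*k+2) p = p (2*k+2) ++ (p (2*k+1) ++ tens (2*k) p) := by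
        rw [tens_succ' (2*k+1) p, tens_succ' (2*k) p]
      have e2q : tens (2*k+2) q = q (2*k+2) ++ (q (2*k+1) ++ tens (2*k) q) := by
        rw [tens_succ' (2*k+1) q, tens_succ' (2*k) q]
      have e3p : tens (2*k+3) p = p (2*k+3) ++ (p (2*k+2) ++ tens (2*k+1) p) := by
        rw [show 2*k+3 = (2*k+2)+1 from rfl, tens_succ', tens_succ']
      have e3q : tens (2*k+3) q = q (2*k+3) ++ (q (2*k+2) ++ tens (2*k+1) q) := by
        rw [show 2*k+3 = (2*k+2)+1 from rfl, tens_succ', tens_succ']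
      have epk := Ep (2*k+1) h1n
      have eqk := Eq' (2*k+1) h1n
      have epk2 := Ep (2*k+2) h2n
      have eqk2 := Eq' (2*k+2) h2n
      -- even inequality at 2k+2
      have ha0 : tens (2*k) q <:+ tens (2*k) p :=
        suffix_of_suffix_length_le' (hsq (2*k) (by omega)) (hsp (2*k) (by omega)) ihe
      have heven : (tens (2*k+2) q).length ≤ (tens (2*k+2) p).length := by
        rw [e2p, e2q]
        exact step' I (tens n p) (q (2*k+2)) (q (2*k+1)) (tens (2*k) q)
          (p (2*k+2)) (p (2*k+1)) (tens (2*k) p)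
          (e2q ▸ hsq (2*k+2) h2le) (e2p ▸ hsp (2*k+2) h2le) ha0
          eqk.1 eqk.2.2.2 epk.2.2.1
      refine ⟨heven, ?_⟩
      -- odd equality at 2k+3
      have haeq : tens (2*k+1) p <:+ tens (2*k+1) q := by rw [iho]
      have haeq' : tens (2*k+1) q <:+ tens (2*k+1) p := by rw [iho]
      have d1 : (tens (2*k+3) p).length ≤ (tens (2*k+3) q).length := by
        rw [e3p, e3q]
        exact step' I (tens n p) (p (2*k+3)) (p (2*k+2)) (tens (2*k+1) p)
          (q (2*k+3)) (q (2*k+2)) (tens (2*k+1) q)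
          (e3p ▸ hsp (2*k+3) h3le) (e3q ▸ hsq (2*k+3) h3le) haeq
          epk2.1 epk2.2.2.2 eqk2.2.2.1
      have d2 : (tens (2*k+3) q).length ≤ (tens (2*k+3) p).length := by
        rw [e3p, e3q]
        exact step' I (tens n p) (q (2*k+3)) (q (2*k+2)) (tens (2*k+1) q)
          (p (2*k+3)) (p (2*k+2)) (tens (2*k+1) p)
          (e3q ▸ hsq (2*k+3) h3le) (e3p ▸ hsp (2*k+3) h3le) haeq'
          eqk2.1 eqk2.2.2.2 epk2.2.2.1
      have hsuf : tens (2*k+3) p <:+ tens (2*k+3) q :=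
        suffix_of_suffix_length_le' (hsp (2*k+3) h3le) (hsq (2*k+3) h3le) d1
      exact hsuf.eq_of_length (le_antisymm d1 d2)
  -- conclude
  obtain ⟨m, hm⟩ := hev
  have hm1 : 1 ≤ m := by omega
  have hkey := (INV (m-1) (by omega)).2
  have hidx : 2*(m-1)+1 = n-1 := by omega
  rw [hidx] at hkey
  have hsucc : n - 1 + 1 = n := by omega
  have enp : tens n p = p n ++ tens (n-1) p := by
    conv_lhs => rw [← hsucc]
    rw [tens_succ', hsucc]
  have enq : tens n q = q n ++ tens (n-1) q := by
    conv_lhs => rw [← hsucc]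
    rw [tens_succ', hsucc]
  have : p n ++ tens (n-1) p = q n ++ tens (n-1) p := by
    rw [← enp, h, enq, hkey]
  exact List.append_cancel_right this

end CPS

namespace CPS
/-- Lemma 2.7(2): equivalent walks of even length have the same final vertex. -/
theorem stmt1 {σ : Type} (I : MonIdeal σ) (n : ℕ) (hn : 0 < n) (hev : Even n)
    (p q : ℕ → Mon σ) (hp : IsWalk I n p) (hq : IsWalk I n q) (h : WEquiv n p q) :
    p n = q n := by
  rcases le_total (q 0).length (p 0).length with h0 | h0
  · exact main' I n hn hev p q hp hq h h0
  · exact (main' I n hn hev q p hq hp h.symm h0).symm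
end CPS
end

section
/- If p and q are equivalent walks of length n > 0 in the CPS graph Γ(A), then p_{2k+1} ⊗ p_{2k} = q_{2k+1} ⊗ q_{2k} for all 0 ≤ k ≤ ⌊n/2⌋. -/
namespace CPS
variable {σ : Type}

lemma mem_of_suffix' {I : MonIdeal σ} {s m : Mon σ} (h : s <:+ m) (hs : I.Mem s) : I.Mem m := by
  obtain ⟨a, r, b, hr, rfl⟩ := hs
  obtain ⟨c, rfl⟩ := h
  exact ⟨c ++ a, r, b, hr, by simp⟩

lemma core_suffix {I : MonIdeal σ} {a₁ a₂ b₁ b₂ : Mon σ}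
    (ha : Edge I a₁ a₂) (hb : Edge I b₁ b₂)
    (hs : a₂ ++ a₁ <:+ b₂ ++ b₁) : a₂ ++ a₁ = b₂ ++ b₁ := by
  by_contra hne
  obtain ⟨hb1, hb2, hbmem, hmin⟩ := hb
  obtain ⟨_, _, hamem, _⟩ := ha
  have hsuf₁ : b₁ <:+ b₂ ++ b₁ := List.suffix_append b₂ b₁
  rcases List.suffix_or_suffix_of_suffix hs hsuf₁ with h1 | h1
  · exact hb1 (mem_of_suffix' h1 hamem)
  · obtain ⟨w, hw1⟩ := h1
    obtain ⟨t, ht⟩ := hs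
    have ht' : (t ++ w) ++ b₁ = b₂ ++ b₁ := by
      rw [List.append_assoc, hw1]; exact ht
    have hw : t ++ w = b₂ := List.append_cancel_right ht'
    have hwne : w ≠ b₂ := by
      rintro rfl
      exact hne (by rw [← hw1])
    exact hmin w ⟨t, hw⟩ hwne (by rw [hw1]; exact hamem)

lemma core {I : MonIdeal σ} {a₁ a₂ b₁ b₂ x y : Mon σ}
    (ha : Edge I a₁ a₂) (hb : Edge I b₁ b₂)
    (hxy : x ++ (a₂ ++ a₁) = y ++ (b₂ ++ b₁)) : a₂ ++ a₁ = b₂ ++ b₁ := by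
  have h₁ : a₂ ++ a₁ <:+ y ++ (b₂ ++ b₁) := hxy ▸ List.suffix_append x _
  have h₂ : b₂ ++ b₁ <:+ y ++ (b₂ ++ b₁) := List.suffix_append y _
  rcases List.suffix_or_suffix_of_suffix h₁ h₂ with h | h
  · exact core_suffix ha hb h
  · exact (core_suffix hb ha h).symm

/-- The partial tensor product p_n ⊗ ⋯ ⊗ p_{2k}. -/
def tt (n k : ℕ) (p : ℕ → Mon σ) : Mon σ :=
  (((List.range' (2*k) (n+1-2*k)).map p).reverse).flatten

lemma tens_eq_tt (n : ℕ) (p : ℕ → Mon σ) : tens n p = tt n 0 p := by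
  simp [tens, tt, List.range_eq_range']

lemma tt_split (n k : ℕ) (p : ℕ → Mon σ) (h : 2*k+1 ≤ n) :
    tt n k p = tt n (k+1) p ++ (p (2*k+1) ++ p (2*k)) := by
  have h2 : n+1-2*k = (n+1-2*(k+1)) + 1 + 1 := by omega
  rw [tt, h2, List.range'_succ, List.range'_succ]
  simp [tt, List.append_assoc, show 2*k+1+1 = 2*(k+1) by ring]

lemma tt_eq {I : MonIdeal σ} {n : ℕ} {p q : ℕ → Mon σ}
    (hp : IsWalk I n p) (hq : IsWalk I n q) (h : WEquiv n p q) :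
    ∀ k : ℕ, 2*k+1 ≤ n → tt n k p = tt n k q := by
  intro k
  induction k with
  | zero => intro _; rw [← tens_eq_tt, ← tens_eq_tt]; exact h
  | succ k ih =>
    intro hk
    have hk' : 2*k+1 ≤ n := by omega
    have hkk := ih hk'
    rw [tt_split n k p hk', tt_split n k q hk'] at hkk
    have hblk := core (hp.2 (2*k) (by omega)) (hq.2 (2*k) (by omega)) hkk
    rw [hblk] at hkk
    exact List.append_cancel_right hkk

end CPS

namespace CPS
/-- Lemma 2.7(3): for equivalent walks, p_{2k+1} ⊗ p_{2k} = q_{2k+1} ⊗ q_{2k}. -/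
theorem stmt2 {σ : Type} (I : MonIdeal σ) (n : ℕ) (hn : 0 < n) (p q : ℕ → Mon σ)
    (hp : IsWalk I n p) (hq : IsWalk I n q) (h : WEquiv n p q) :
    ∀ k : ℕ, 2 * k + 1 ≤ n →
      p (2 * k + 1) ++ p (2 * k) = q (2 * k + 1) ++ q (2 * k) := by
  intro k hk
  have htt := tt_eq hp hq h k hk
  rw [tt_split n k p hk, tt_split n k q hk] at htt
  exact core (hp.2 (2*k) (by omega)) (hq.2 (2*k) (by omega)) htt
end CPS
end
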